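/- arXiv:2202.01114 — 9 statements merged into one kernel-verified Lean document; each statement's English description precedes it below -/
import Mathlib

section
/- Let A = {(0,0),(2,0),(2,2),(0,1)} ⊂ ℤ². Then for every t ≥ 0, the cardinality of the t-fold sumset tA equals (3/2)(t² + t) + 1, i.e. |tA| = (3t² + 3t + 2)/2. -/
open Pointwise


def Pp (t : ℕ) (p : ℤ × ℤ) : Prop :=
  0 ≤ p.1 ∧ p.1 ≤ 2*t ∧ 2 ∣ p.1 ∧ 0 ≤ p.2 ∧ 2*p.2 ≤ 2*t + p.1 ∧ (p.1 = 2*t → 2 ∣ p.2)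

lemma key (A : Finset (ℤ × ℤ)) (hA : A = {(0,0), (2,0), (2,2), (0,1)}) :
    ∀ t (p : ℤ × ℤ), p ∈ t • A ↔ Pp t p := by
  intro t
  induction t with
  | zero =>
    intro p
    rw [zero_nsmul, Finset.mem_zero]
    simp only [Pp, Prod.ext_iff, Prod.fst_zero, Prod.snd_zero]
    omega
  | succ n ih =>
    intro p
    rw [succ_nsmul, Finset.mem_add]
    constructor
    · rintro ⟨q, hq, a, ha, rfl⟩
      rw [ih] at hq
      simp only [hA, Finset.mem_insert, Finset.mem_singleton] at ha
      simp only [Pp] at hq ⊢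
      rcases ha with rfl | rfl | rfl | rfl <;>
        refine ⟨?_, ?_, ?_, ?_, ?_, ?_⟩ <;>
          simp only [Prod.fst_add, Prod.snd_add] <;> omega
    · intro hp
      simp only [Pp] at hp
      by_cases h1 : p.1 = 2*((n:ℤ)+1)
      · by_cases h2 : p.2 = 0
        · refine ⟨(p.1 - 2, 0), (ih _).2 ?_, (2,0), by simp [hA], ?_⟩
          · exact ⟨by omega, by omega, by omega, by omega, by omega, by omega⟩
          · simp only [Prod.ext_iff, Prod.fst_add, Prod.snd_add]; constructor <;> omega
        · refine ⟨(p.1 - 2, p.2 - 2), (ih _).2 ?_, (2,2), by simp [hA], ?_⟩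
          · exact ⟨by omega, by omega, by omega, by omega, by omega, by omega⟩
          · simp only [Prod.ext_iff, Prod.fst_add, Prod.snd_add]; constructor <;> omega
      · by_cases h3 : Pp n p
        · refine ⟨p, (ih _).2 h3, (0,0), by simp [hA], ?_⟩
          simp only [Prod.ext_iff, Prod.fst_add, Prod.snd_add]; constructor <;> omega
        · simp only [Pp] at h3
          refine ⟨(p.1, p.2 - 1), (ih _).2 ?_, (0,1), by simp [hA], ?_⟩
          · exact ⟨by omega, by omega, by omega, by omega, by omega, by omega⟩
          · simp only [Prod.ext_iff, Prod.fst_add, Prod.snd_add]; constructor <;> omega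

def col (t m : ℕ) : Finset (ℤ × ℤ) :=
  if m = t then (Finset.range (t+1)).image (fun k : ℕ => ((2*(t:ℤ)), (2*(k:ℤ))))
  else (Finset.range (t+m+1)).image (fun k : ℕ => ((2*(m:ℤ)), ((k:ℤ))))

def SS (t : ℕ) : Finset (ℤ × ℤ) := (Finset.range (t+1)).biUnion (col t)

lemma fst_col {t m : ℕ} {p : ℤ × ℤ} (hp : p ∈ col t m) : p.1 = 2*m := by
  unfold col at hp
  split at hp <;> simp only [Finset.mem_image] at hp <;> obtain ⟨k, _, rfl⟩ := hp <;> simp_all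

lemma col_card (t m : ℕ) : (col t m).card = if m = t then t+1 else t+m+1 := by
  unfold col
  split
  · rw [Finset.card_image_of_injective _ (fun a b h => by
      simpa using (Prod.ext_iff.1 h).2), Finset.card_range]
  · rw [Finset.card_image_of_injective _ (fun a b h => by
      simpa using (Prod.ext_iff.1 h).2), Finset.card_range]

lemma gauss (t : ℕ) : 2 * (∑ i ∈ Finset.range t, i) + t = t * t := by
  induction t with
  | zero => simp
  | succ n ih =>
    rw [Finset.sum_range_succ]
    nlinarith [ih]

lemma SS_card (t : ℕ) : 2 * (SS t).card = 3 * t ^ 2 + 3 * t + 2 := by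
  have hdisj : ∀ m ∈ Finset.range (t+1), ∀ m' ∈ Finset.range (t+1), m ≠ m' →
      Disjoint (col t m) (col t m') := by
    intro m _ m' _ hne
    rw [Finset.disjoint_left]
    intro p hp hp'
    have := fst_col hp
    have := fst_col hp'
    omega
  rw [SS, Finset.card_biUnion hdisj]
  simp only [col_card]
  rw [Finset.sum_range_succ, if_pos rfl]
  rw [Finset.sum_congr rfl (fun m hm => if_neg (by simp at hm; omega))]
  have h1 : ∑ m ∈ Finset.range t, (t + m + 1) = t * (t+1) + ∑ m ∈ Finset.range t, m := by
    rw [Finset.sum_add_distrib, Finset.sum_add_distrib, Finset.sum_const, Finset.sum_const]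
    simp [mul_comm]; ring
  rw [h1]
  nlinarith [gauss t]

lemma mem_SS (t : ℕ) (p : ℤ × ℤ) : p ∈ SS t ↔ Pp t p := by
  constructor
  · intro hp
    simp only [SS, Finset.mem_biUnion, Finset.mem_range] at hp
    obtain ⟨m, hm, hp⟩ := hp
    unfold col at hp
    split at hp <;> simp only [Finset.mem_image, Finset.mem_range] at hp <;>
      obtain ⟨k, hk, rfl⟩ := hp <;>
      exact ⟨by omega, by omega, by omega, by omega, by omega, by omega⟩
  · rintro ⟨h1, h2, h3, h4, h5, h6⟩
    simp only [SS, Finset.mem_biUnion, Finset.mem_range]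
    by_cases hx : p.1 = 2 * t
    · obtain ⟨d, hd⟩ := h6 hx
      refine ⟨t, by omega, ?_⟩
      rw [col, if_pos rfl, Finset.mem_image]
      exact ⟨d.toNat, by simp only [Finset.mem_range]; omega,
        Prod.ext (by omega) (by omega)⟩
    · obtain ⟨c, hc⟩ := h3
      refine ⟨c.toNat, by omega, ?_⟩
      rw [col, if_neg (by omega), Finset.mem_image]
      exact ⟨p.2.toNat, by simp only [Finset.mem_range]; omega,
        Prod.ext (by simp; omega) (by simp; omega)⟩

/-- For `A = {(0,0),(2,0),(2,2),(0,1)} ⊂ ℤ²`, the `t`-fold sumset `tA` satisfies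
`|tA| = (3t² + 3t + 2)/2` for every `t ≥ 0`. -/
theorem stmt_0 (A : Finset (ℤ × ℤ))
    (hA : A = {(0,0), (2,0), (2,2), (0,1)}) :
    ∀ t : ℕ, 2 * (t • A).card = 3 * t ^ 2 + 3 * t + 2 := by
  intro t
  have h : t • A = SS t := Finset.ext fun p => (key A hA t p).trans (mem_SS t p).symm
  rw [h, SS_card]
end

section
/- Let A = {(0,0),(3,0),(2,2),(0,1)} ⊂ ℤ². Then for all integers t ≥ 5, the cardinality of the t-fold sumset tA equals 4t² − 16t + 36. -/
open Pointwise
open Finset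

def A0 : Finset (ℤ × ℤ) := {(0,0), (3,0), (2,2), (0,1)}
def phi (p : ℕ × ℕ × ℕ) : ℤ × ℤ := (3*p.1+2*p.2.1, 2*p.2.1+p.2.2)

def Dset (s : ℕ) : Finset (ℕ × ℕ) :=
  ((range (s+1)) ×ˢ (range (s+1))).filter
    (fun p => p.1 + p.2 ≤ s ∧ (p.1 ≤ 1 ∨ p.2 ≤ 5))

lemma mem_Dset {s : ℕ} {p : ℕ×ℕ} :
    p ∈ Dset s ↔ p.1+p.2 ≤ s ∧ (p.1 ≤ 1 ∨ p.2 ≤ 5) := by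
  obtain ⟨b,d⟩ := p
  simp [Dset, Finset.mem_filter, Finset.mem_product, Finset.mem_range]
  omega

def jf (n i : ℕ) : ℕ × ℕ := if i ≤ 1 then (i, n+1-i) else (n+3-i, i-2)

lemma card_Dset : ∀ s, 6 ≤ s → (Dset s).card = 8*s - 20 := by
  intro s hs
  induction s with
  | zero => omega
  | succ n ih =>
    rcases Nat.lt_or_ge n 6 with h | h
    · have : n = 5 := by omega
      subst this; decide
    · have hinj : Set.InjOn (jf n) (range 8) := by
        intro i hi i' hi' hii
        simp only [coe_range, Set.mem_Iio] at hi hi'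
        interval_cases i <;> interval_cases i' <;> (try rfl) <;>
          ((exfalso; norm_num [jf, Prod.ext_iff] at hii) <;> omega)
      have hF : (Dset (n+1)).filter (fun p => p.1+p.2 = n+1) = (range 8).image (jf n) := by
        ext ⟨b,d⟩
        simp only [Finset.mem_filter, mem_Dset, Finset.mem_image, Finset.mem_range]
        constructor
        · rintro ⟨⟨-, hbd⟩, hsum⟩
          rcases hbd with hb | hd
          · refine ⟨b, by omega, ?_⟩
            simp only [jf, if_pos hb, Prod.mk.injEq]
            exact ⟨trivial, by omega⟩
          · refine ⟨d+2, by omega, ?_⟩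
            have h2 : ¬ (d+2 ≤ 1) := by omega
            simp only [jf, if_neg h2, Prod.mk.injEq]
            omega
        · rintro ⟨i, hi, hji⟩
          interval_cases i <;> ((norm_num [jf, Prod.ext_iff] at hji) <;> omega)
      have hsplit : Dset (n+1) = Dset n ∪ (Dset (n+1)).filter (fun p => p.1+p.2 = n+1) := by
        ext ⟨b,d⟩
        simp only [Finset.mem_union, Finset.mem_filter, mem_Dset]
        omega
      have hdisj : Disjoint (Dset n) ((Dset (n+1)).filter (fun p => p.1+p.2 = n+1)) := by
        rw [Finset.disjoint_left]
        rintro ⟨b,d⟩ hp hq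
        simp only [Finset.mem_filter, mem_Dset] at hp hq
        omega
      rw [hsplit, Finset.card_union_of_disjoint hdisj, hF,
        Finset.card_image_of_injOn hinj, ih h, Finset.card_range]
      omega



def Tset (t : ℕ) : Finset (ℕ × ℕ × ℕ) :=
  ((range (t+1)) ×ˢ (range (t+1)) ×ˢ (range (t+1))).filter
    (fun p => p.1 + p.2.1 + p.2.2 ≤ t ∧ (p.1 ≤ 1 ∨ p.2.2 ≤ 5))

lemma mem_Tset {t : ℕ} {p : ℕ×ℕ×ℕ} :
    p ∈ Tset t ↔ p.1+p.2.1+p.2.2 ≤ t ∧ (p.1 ≤ 1 ∨ p.2.2 ≤ 5) := by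
  obtain ⟨b,c,d⟩ := p
  simp [Tset, Finset.mem_filter, Finset.mem_product, Finset.mem_range]
  omega

lemma card_Tset : ∀ t, 5 ≤ t → ((Tset t).card : ℤ) = 4*t^2 - 16*t + 36 := by
  intro t ht
  induction t with
  | zero => omega
  | succ n ih =>
    rcases Nat.lt_or_ge n 5 with h | h
    · have : n = 4 := by omega
      subst this
      have : (Tset 5).card = 56 := by decide
      rw [this]; norm_num
    · have hsplit : Tset (n+1) =
          (Tset n).image (fun p => (p.1, p.2.1+1, p.2.2)) ∪
          (Dset (n+1)).image (fun q => (q.1, 0, q.2)) := by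
        ext ⟨b,c,d⟩
        simp only [Finset.mem_union, Finset.mem_image, mem_Tset, mem_Dset, Prod.mk.injEq]
        constructor
        · rintro ⟨hle, hor⟩
          cases c with
          | zero =>
            refine Or.inr ⟨(b,d), ?_, rfl, rfl, rfl⟩
            simp only [Prod.fst, Prod.snd]
            omega
          | succ c' =>
            refine Or.inl ⟨(b,c',d), ?_, rfl, rfl, rfl⟩
            simp only [Prod.fst, Prod.snd]
            omega
        · rintro (⟨⟨b',c',d'⟩, ⟨hle, hor⟩, rfl, rfl, rfl⟩ | ⟨⟨b',d'⟩, ⟨hle, hor⟩, rfl, rfl, rfl⟩) <;>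
            exact ⟨by omega, by omega⟩
      have hdisj : Disjoint ((Tset n).image (fun p => (p.1, p.2.1+1, p.2.2)))
          ((Dset (n+1)).image (fun q => (q.1, 0, q.2))) := by
        rw [Finset.disjoint_left]
        rintro ⟨b,c,d⟩ hp hq
        simp only [Finset.mem_image, Prod.mk.injEq] at hp hq
        obtain ⟨_, _, _, hc, _⟩ := hp
        obtain ⟨_, _, _, hc', _⟩ := hq
        omega
      have hinj1 : Function.Injective (fun p : ℕ×ℕ×ℕ => (p.1, p.2.1+1, p.2.2)) := by
        rintro ⟨a,b,c⟩ ⟨a',b',c'⟩ h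
        simp only [Prod.mk.injEq] at h
        obtain ⟨h1, h2, h3⟩ := h
        simp_all
      have hinj2 : Function.Injective (fun q : ℕ×ℕ => (q.1, (0:ℕ), q.2)) := by
        rintro ⟨a,b⟩ ⟨a',b'⟩ h
        simp only [Prod.mk.injEq] at h
        simp_all
      have hcard : (Tset (n+1)).card = (Tset n).card + (Dset (n+1)).card := by
        rw [hsplit, Finset.card_union_of_disjoint hdisj,
          Finset.card_image_of_injective _ hinj1, Finset.card_image_of_injective _ hinj2]
      have h2 : (Dset (n+1)).card = 8*(n+1) - 20 := card_Dset _ (by omega)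
      have h3 : ((Dset (n+1)).card : ℤ) = 8*(n+1) - 20 := by
        rw [h2]; push_cast [Nat.cast_sub (by omega : 20 ≤ 8*(n+1))]; ring
      rw [hcard]
      push_cast
      rw [ih h, h3]
      push_cast
      ring



lemma smul_mem_smul_finset' {n : ℕ} {a : ℤ×ℤ} (h : a ∈ A0) : n • a ∈ n • A0 := by
  induction n with
  | zero => simp [zero_nsmul, Finset.mem_zero]
  | succ m ih =>
    rw [succ_nsmul, succ_nsmul]
    exact Finset.add_mem_add ih h

lemma addmem {m n : ℕ} {x y : ℤ×ℤ} (hx : x ∈ m • A0) (hy : y ∈ n • A0) :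
    x + y ∈ (m+n) • A0 := by
  rw [add_nsmul]
  exact Finset.add_mem_add hx hy

lemma phi_mem {b c d t : ℕ} (h : b + c + d ≤ t) : phi (b,c,d) ∈ t • A0 := by
  obtain ⟨e, rfl⟩ : ∃ e, t = b + c + d + e := ⟨t-(b+c+d), by omega⟩
  have key : phi (b,c,d) = b • ((3,0) : ℤ×ℤ) + c • ((2,2) : ℤ×ℤ)
      + d • ((0,1) : ℤ×ℤ) + e • ((0,0) : ℤ×ℤ) := by
    simp only [phi, Prod.ext_iff, Prod.smul_mk, Prod.fst_add, Prod.snd_add,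
      Prod.fst, Prod.snd, nsmul_eq_mul]
    constructor <;> push_cast <;> ring
  rw [key]
  refine addmem (addmem (addmem ?_ ?_) ?_) ?_
  · exact smul_mem_smul_finset' (show ((3:ℤ),(0:ℤ)) ∈ A0 by simp [A0])
  · exact smul_mem_smul_finset' (show ((2:ℤ),(2:ℤ)) ∈ A0 by simp [A0])
  · exact smul_mem_smul_finset' (show ((0:ℤ),(1:ℤ)) ∈ A0 by simp [A0])
  · exact smul_mem_smul_finset' (show ((0:ℤ),(0:ℤ)) ∈ A0 by simp [A0])

lemma myrepr : ∀ t : ℕ, ∀ x ∈ t • A0, ∃ p : ℕ×ℕ×ℕ, p.1+p.2.1+p.2.2 ≤ t ∧ phi p = x := by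
  intro t
  induction t with
  | zero =>
    intro x hx
    rw [zero_nsmul, Finset.mem_zero] at hx
    exact ⟨(0,0,0), by simp, by simp [phi, hx, Prod.ext_iff]⟩
  | succ n ih =>
    intro x hx
    rw [succ_nsmul, Finset.mem_add] at hx
    obtain ⟨y, hy, a, ha, rfl⟩ := hx
    obtain ⟨⟨b,c,d⟩, hle, rfl⟩ := ih y hy
    simp only [A0, Finset.mem_insert, Finset.mem_singleton] at ha
    rcases ha with rfl | rfl | rfl | rfl
    · refine ⟨(b,c,d), by simp only [Prod.fst, Prod.snd] at hle ⊢; omega, ?_⟩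
      refine Prod.ext ?_ ?_ <;> simp [phi] <;> push_cast <;> ring
    · refine ⟨(b+1,c,d), by simp only [Prod.fst, Prod.snd] at hle ⊢; omega, ?_⟩
      refine Prod.ext ?_ ?_ <;> simp [phi] <;> push_cast <;> ring
    · refine ⟨(b,c+1,d), by simp only [Prod.fst, Prod.snd] at hle ⊢; omega, ?_⟩
      refine Prod.ext ?_ ?_ <;> simp [phi] <;> push_cast <;> ring
    · refine ⟨(b,c,d+1), by simp only [Prod.fst, Prod.snd] at hle ⊢; omega, ?_⟩
      refine Prod.ext ?_ ?_ <;> simp [phi] <;> push_cast <;> ring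

lemma canon : ∀ b c d : ℕ, ∃ q : ℕ×ℕ×ℕ,
    q.1+q.2.1+q.2.2 ≤ b+c+d ∧ (q.1 ≤ 1 ∨ q.2.2 ≤ 5) ∧ phi q = phi (b,c,d) := by
  intro b
  induction b using Nat.strong_induction_on with
  | _ b ih =>
    intro c d
    by_cases hb : b ≤ 1
    · exact ⟨(b,c,d), le_refl _, Or.inl hb, rfl⟩
    · by_cases hd : d ≤ 5
      · exact ⟨(b,c,d), le_refl _, Or.inr hd, rfl⟩
      · obtain ⟨q, hq1, hq2, hq3⟩ := ih (b-2) (by omega) (c+3) (d-6)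
        refine ⟨q, by omega, hq2, ?_⟩
        rw [hq3]
        simp only [phi, Prod.mk.injEq]
        constructor <;> omega



lemma smul_A_eq (t : ℕ) : t • A0 = (Tset t).image phi := by
  ext x
  constructor
  · intro hx
    obtain ⟨⟨b,c,d⟩, hle, rfl⟩ := myrepr t x hx
    obtain ⟨⟨b',c',d'⟩, h1, h2, h3⟩ := canon b c d
    refine Finset.mem_image.2 ⟨(b',c',d'), mem_Tset.2 ⟨?_, h2⟩, h3⟩
    simp only [Prod.fst, Prod.snd] at hle h1 ⊢
    omega
  · intro hx
    obtain ⟨⟨b,c,d⟩, hp, rfl⟩ := Finset.mem_image.1 hx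
    have := (mem_Tset.1 hp).1
    simp only [Prod.fst, Prod.snd] at this
    exact phi_mem this

lemma phi_injOn (t : ℕ) : Set.InjOn phi (Tset t) := by
  rintro ⟨b,c,d⟩ hp ⟨b',c',d'⟩ hq h
  have h1 := (mem_Tset.1 hp).2
  have h2 := (mem_Tset.1 hq).2
  simp only [phi, Prod.mk.injEq] at h
  simp only [Prod.fst, Prod.snd] at h1 h2
  obtain ⟨e1, e2⟩ := h
  simp only [Prod.mk.injEq]
  omega

/-- For `A = {(0,0),(3,0),(2,2),(0,1)} ⊂ ℤ²`, the `t`-fold sumset `tA` satisfies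
`|tA| = 4t² − 16t + 36` for all `t ≥ 5`. -/
theorem stmt_1 (A : Finset (ℤ × ℤ))
    (hA : A = {(0,0), (3,0), (2,2), (0,1)}) :
    ∀ t : ℕ, 5 ≤ t → ((t • A).card : ℤ) = 4 * t ^ 2 - 16 * t + 36 := by
  intro t ht
  have hA0 : A = A0 := hA
  rw [hA0, smul_A_eq t, Finset.card_image_of_injOn (phi_injOn t)]
  exact card_Tset t ht
end

section
/- Let A = {(0,0),(1,0),(0,1),(2,0),(0,2),(3,0),(2,1),(1,2),(0,3)} ⊂ ℤ². Then for all integers t ≥ 2, |tA| = (9t² + 9t + 2)/2 = C(3t+2, 2), while |1A| = 9 ≠ C(5,2). -/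
/-!
`A` is the triangle `{x, y ≥ 0, x + y ≤ 3}` with `(1, 1)` removed. Already `A + A` is the full
triangle of side `6`, and adding `A` to a triangle of side `n ≥ 3` gives the triangle of side
`n + 3`: a point of height at most `n` is reached with `(0, 0)`, and a higher point lies above
some point of the top edge `x + y = 3`, all of which are in `A`. Hence `tA` is the triangle of
side `3t` for `t ≥ 2`, which has `C(3t + 2, 2)` lattice points.
-/

open Pointwise Finset

def layer (k : ℕ) : Finset (ℤ × ℤ) :=
  (antidiagonal k).map (Nat.castEmbedding.prodMap Nat.castEmbedding)

def simplex (n : ℕ) : Finset (ℤ × ℤ) :=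
  (range (n + 1)).biUnion layer

theorem mem_layer {k : ℕ} {p : ℤ × ℤ} :
    p ∈ layer k ↔ 0 ≤ p.1 ∧ 0 ≤ p.2 ∧ p.1 + p.2 = k := by
  obtain ⟨x, y⟩ := p
  simp only [layer, mem_map, HasAntidiagonal.mem_antidiagonal, Prod.exists,
    Function.Embedding.coe_prodMap, Prod.map, Nat.castEmbedding_apply, Prod.mk.injEq]
  constructor
  · rintro ⟨i, j, rfl, rfl, rfl⟩
    push_cast
    omega
  · rintro ⟨hx, hy, hxy⟩
    exact ⟨x.toNat, y.toNat, by omega, by omega, by omega⟩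

theorem mem_simplex {n : ℕ} {p : ℤ × ℤ} :
    p ∈ simplex n ↔ 0 ≤ p.1 ∧ 0 ≤ p.2 ∧ p.1 + p.2 ≤ n := by
  simp only [simplex, mem_biUnion, mem_range, mem_layer]
  constructor
  · rintro ⟨k, hk, hx, hy, hxy⟩
    omega
  · rintro ⟨hx, hy, hxy⟩
    exact ⟨(p.1 + p.2).toNat, by omega, hx, hy, by omega⟩

theorem card_layer (k : ℕ) : #(layer k) = k + 1 := by
  rw [layer, card_map, Nat.card_antidiagonal]

theorem sum_range_succ_eq_choose_two (n : ℕ) :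
    ∑ k ∈ range (n + 1), (k + 1) = (n + 2).choose 2 := by
  induction n with
  | zero => rfl
  | succ n ih =>
    rw [sum_range_succ, ih, Nat.choose_succ_succ' (n + 2) 1, Nat.choose_one_right, add_comm]

theorem card_simplex (n : ℕ) : #(simplex n) = (n + 2).choose 2 := by
  rw [simplex, card_biUnion, ← sum_range_succ_eq_choose_two]
  · simp only [card_layer]
  · intro k _ l _ hkl
    refine disjoint_left.mpr fun p hk hl => hkl ?_
    rw [mem_layer] at hk hl
    omega

theorem simplex_add_subset (m n : ℕ) : simplex m + simplex n ⊆ simplex (m + n) := by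
  rintro _ h
  obtain ⟨p, hp, q, hq, rfl⟩ := mem_add.mp h
  rw [mem_simplex] at *
  simp only [Prod.fst_add, Prod.snd_add]
  push_cast
  omega

theorem simplex_add_eq {A : Finset (ℤ × ℤ)} {d n : ℕ} (hA : A ⊆ simplex d)
    (h0 : (0, 0) ∈ A) (hd : layer d ⊆ A) (hn : d ≤ n + 1) :
    simplex n + A = simplex (n + d) := by
  refine (add_subset_add_left hA).trans (simplex_add_subset n d) |>.antisymm fun p hp => ?_
  obtain ⟨hx, hy, hxy⟩ := mem_simplex.mp hp
  by_cases hsmall : p.1 + p.2 ≤ n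
  · exact mem_add.mpr ⟨p, mem_simplex.mpr ⟨hx, hy, hsmall⟩, (0, 0), h0, add_zero p⟩
  have ha : (min p.1 d, d - min p.1 d) ∈ layer d :=
    mem_layer.mpr ⟨by omega, by omega, by omega⟩
  refine mem_add.mpr ⟨_, mem_simplex.mpr ⟨?_, ?_, ?_⟩, _, hd ha, sub_add_cancel p _⟩ <;>
    simp only [Prod.fst_sub, Prod.snd_sub] <;> omega

theorem nsmul_eq_simplex {A : Finset (ℤ × ℤ)} {d k t : ℕ} (hA : A ⊆ simplex d)
    (h0 : (0, 0) ∈ A) (hd : layer d ⊆ A) (hk : 0 < k)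
    (hkA : k • A = simplex (k * d)) (ht : k ≤ t) :
    t • A = simplex (t * d) := by
  induction t, ht using Nat.le_induction with
  | base => exact hkA
  | succ t ht ih =>
    rw [succ_nsmul, ih, simplex_add_eq hA h0 hd, add_one_mul]
    nlinarith

/-- For `A = {(0,0),(1,0),(0,1),(2,0),(0,2),(3,0),(2,1),(1,2),(0,3)} ⊂ ℤ²`,
`|tA| = (9t² + 9t + 2)/2 = C(3t+2,2)` for all `t ≥ 2`, while `|1A| = 9 ≠ C(5,2)`. -/
theorem stmt_4 (A : Finset (ℤ × ℤ))
    (hA : A = {(0,0), (1,0), (0,1), (2,0), (0,2), (3,0), (2,1), (1,2), (0,3)}) :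
    (∀ t : ℕ, 2 ≤ t →
      2 * (t • A).card = 9 * t ^ 2 + 9 * t + 2 ∧
      (t • A).card = Nat.choose (3 * t + 2) 2) ∧
    ((1 : ℕ) • A).card = 9 ∧ (9 : ℕ) ≠ Nat.choose 5 2 := by
  have hA3 : A ⊆ simplex 3 := by rw [hA]; decide
  have h0 : (0, 0) ∈ A := by rw [hA]; decide
  have hd : layer 3 ⊆ A := by rw [hA]; decide
  have h2 : 2 • A = simplex (2 * 3) := by rw [two_nsmul, hA]; decide
  refine ⟨fun t ht => ?_, by rw [one_nsmul, hA]; rfl, by decide⟩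
  rw [nsmul_eq_simplex hA3 h0 hd two_pos h2 ht, card_simplex, mul_comm t]
  refine ⟨?_, rfl⟩
  have h := Nat.add_one_mul_choose_eq (3 * t + 1) 1
  rw [Nat.choose_one_right] at h
  linarith
end

section
/- Let A = {(0,0),(1,1),(3,0),(0,3)} ⊂ ℤ². Then for every t ≥ 0, |tA| = (3t² + 3t + 2)/2. -/
/-!
The sumsets `tA` are the points `(x, y)` of the lattice `x ≡ y (mod 3)` in the triangle
`x, y ≥ 0, x + y ≤ 3t`: adding `A` to the level-`t` triangle fills the level-`t + 1` one, since
every lattice point of the latter can be moved into the former by subtracting a suitable element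
of `A`: `(0, 0)` if `x + y ≤ 3t`, `(1, 1)` if `x + y ∈ {3t + 1, 3t + 2}`, and otherwise `(3, 0)` or
`(0, 3)`, whichever fits. Passing from level `t` to `t + 1` adds the `3t + 3` lattice points with
`3t < x + y ≤ 3t + 3`, one over each `x ∈ [0, 3t + 3]` except `x = 3t + 2`.
-/

open Pointwise Finset

noncomputable def latticeTriangle (t : ℕ) : Finset (ℤ × ℤ) :=
  (Icc 0 (3 * t : ℤ) ×ˢ Icc 0 (3 * t : ℤ)).filter fun p => p.1 + p.2 ≤ 3 * t ∧ 3 ∣ p.1 - p.2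

lemma mem_latticeTriangle {t : ℕ} {p : ℤ × ℤ} :
    p ∈ latticeTriangle t ↔ 0 ≤ p.1 ∧ 0 ≤ p.2 ∧ p.1 + p.2 ≤ 3 * t ∧ 3 ∣ p.1 - p.2 := by
  simp only [latticeTriangle, mem_filter, mem_product, mem_Icc]
  omega

lemma latticeTriangle_zero : latticeTriangle 0 = 0 := by
  ext p
  simp only [mem_latticeTriangle, mem_zero, Prod.ext_iff, Prod.fst_zero, Prod.snd_zero]
  omega

lemma latticeTriangle_one : latticeTriangle 1 = {(0, 0), (1, 1), (3, 0), (0, 3)} := by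
  ext p
  simp only [mem_latticeTriangle, mem_insert, mem_singleton, Prod.ext_iff]
  omega

lemma exists_sub_mem_latticeTriangle {t : ℕ} {p : ℤ × ℤ} (hp : p ∈ latticeTriangle (t + 1)) :
    ∃ a ∈ latticeTriangle 1, p - a ∈ latticeTriangle t := by
  simp only [latticeTriangle_one, mem_insert, mem_singleton, exists_eq_or_imp, exists_eq_left,
    mem_latticeTriangle, Prod.fst_sub, Prod.snd_sub] at hp ⊢
  omega

lemma latticeTriangle_add_one (t : ℕ) :
    latticeTriangle t + latticeTriangle 1 = latticeTriangle (t + 1) := by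
  ext p
  constructor
  · intro hp
    obtain ⟨q, hq, a, ha, rfl⟩ := mem_add.1 hp
    rw [mem_latticeTriangle] at hq ha ⊢
    simp only [Prod.fst_add, Prod.snd_add]
    omega
  · intro hp
    obtain ⟨a, ha, hpa⟩ := exists_sub_mem_latticeTriangle hp
    exact mem_add.2 ⟨p - a, hpa, a, ha, sub_add_cancel p a⟩

lemma nsmul_latticeTriangle_one (t : ℕ) : t • latticeTriangle 1 = latticeTriangle t := by
  induction t with
  | zero => rw [zero_nsmul, latticeTriangle_zero]
  | succ t ih => rw [succ_nsmul, ih, latticeTriangle_add_one]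

lemma filter_le_latticeTriangle_succ (t : ℕ) :
    (latticeTriangle (t + 1)).filter (fun p : ℤ × ℤ => p.1 + p.2 ≤ 3 * t) = latticeTriangle t := by
  ext p
  simp only [mem_filter, mem_latticeTriangle]
  omega

/-- `y = 3t + 3 - x - x % 3` is the unique `y ≡ x (mod 3)` with `3t < x + y ≤ 3t + 3`; it is
negative exactly for `x = 3t + 2`. -/
lemma filter_not_le_latticeTriangle_succ (t : ℕ) :
    (latticeTriangle (t + 1)).filter (fun p : ℤ × ℤ => ¬ p.1 + p.2 ≤ 3 * t) =
      ((range (3 * t + 4)).erase (3 * t + 2)).image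
        fun x : ℕ => ((x : ℤ), 3 * (t : ℤ) + 3 - x - x % 3) := by
  ext p
  simp only [mem_filter, mem_latticeTriangle, mem_image, mem_erase, mem_range, Prod.ext_iff]
  constructor
  · rintro ⟨⟨hx, hy, hs, hd⟩, hlt⟩
    exact ⟨p.1.toNat, by omega, by omega, by omega⟩
  · rintro ⟨x, hx, h1, h2⟩
    omega

lemma card_latticeTriangle_succ (t : ℕ) :
    #(latticeTriangle (t + 1)) = #(latticeTriangle t) + (3 * t + 3) := by
  have hinj : Function.Injective fun x : ℕ => ((x : ℤ), 3 * (t : ℤ) + 3 - x - x % 3) :=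
    fun x y h => by simpa using congrArg Prod.fst h
  rw [← card_filter_add_card_filter_not (fun p : ℤ × ℤ => p.1 + p.2 ≤ 3 * t),
    filter_le_latticeTriangle_succ, filter_not_le_latticeTriangle_succ,
    card_image_of_injective _ hinj, card_erase_of_mem (by simp), card_range]
  rfl

lemma two_mul_card_latticeTriangle (t : ℕ) : 2 * #(latticeTriangle t) = 3 * t ^ 2 + 3 * t + 2 := by
  induction t with
  | zero => simp [latticeTriangle_zero]
  | succ t ih => rw [card_latticeTriangle_succ]; linarith

/-- For `A = {(0,0),(1,1),(3,0),(0,3)} ⊂ ℤ²`, `|tA| = (3t² + 3t + 2)/2` for every `t ≥ 0`. -/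
theorem stmt_5 (A : Finset (ℤ × ℤ))
    (hA : A = {(0,0), (1,1), (3,0), (0,3)}) :
    ∀ t : ℕ, 2 * (t • A).card = 3 * t ^ 2 + 3 * t + 2 := by
  intro t
  rw [hA, ← latticeTriangle_one, nsmul_latticeTriangle_one, two_mul_card_latticeTriangle]
end

section
/- Let A = {(2,2),(2,0),(1,2),(0,4)} ⊂ ℤ². Then for every t ≥ 0, |tA| = t² + 2t + 1 = (t+1)². -/
/-!
Up to the translation by `(2, 0)`, `A` is the image of `T = {(0,0), (1,0), (2,0), (0,1)}` under
the injective additive map `(a, b) ↦ (-a, 2a + 2b)`, so `|tA| = |tT|`. The set `T` consists of the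
lattice points of the triangle `a, b ≥ 0, a + 2b ≤ 2`, and `tT` is the set of all lattice points
of its `t`-th dilate; their rows have `2t + 1, 2t - 1, …, 1` points, which add up to `(t + 1)²`.
-/

open Pointwise

namespace Finset

variable {α β : Type*} [DecidableEq α] [DecidableEq β] [AddCommMonoid α] [AddCancelCommMonoid β]

theorem card_nsmul_singleton_add_image (c : β) {f : α →+ β} (hf : Function.Injective f)
    (s : Finset α) (t : ℕ) : (t • ({c} + s.image f)).card = (t • s).card := by
  rw [nsmul_add, nsmul_singleton, ← image_nsmul, card_singleton_add, card_image_of_injective _ hf]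

end Finset

open Finset

noncomputable def triangle (t : ℕ) : Finset (ℤ × ℤ) :=
  (Icc 0 (2 * t : ℤ) ×ˢ Icc 0 (t : ℤ)).filter fun p => p.1 + 2 * p.2 ≤ 2 * t

theorem mem_triangle {t : ℕ} {p : ℤ × ℤ} :
    p ∈ triangle t ↔ 0 ≤ p.1 ∧ 0 ≤ p.2 ∧ p.1 + 2 * p.2 ≤ 2 * t := by
  simp only [triangle, mem_filter, mem_product, mem_Icc]
  omega

theorem triangle_zero : triangle 0 = {0} := by
  ext ⟨a, b⟩
  simp only [mem_triangle, mem_singleton, Prod.mk_eq_zero]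
  omega

theorem triangle_one : triangle 1 = {(0, 0), (1, 0), (2, 0), (0, 1)} := by
  ext ⟨a, b⟩
  simp only [mem_triangle, mem_insert, mem_singleton, Prod.mk.injEq]
  omega

theorem triangle_add_triangle_one (t : ℕ) : triangle t + triangle 1 = triangle (t + 1) := by
  ext p
  constructor
  · rw [mem_add]
    rintro ⟨q, hq, g, hg, rfl⟩
    rw [mem_triangle] at hq hg ⊢
    simp only [Prod.fst_add, Prod.snd_add]
    push_cast at hg ⊢
    omega
  · intro hp
    rw [mem_triangle] at hp
    push_cast at hp
    have split (g : ℤ × ℤ) (hg : g ∈ triangle 1) (h : p - g ∈ triangle t) :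
        p ∈ triangle t + triangle 1 :=
      sub_add_cancel p g ▸ add_mem_add h hg
    -- peel off the step `(0, 1)` if possible, otherwise the longest horizontal step
    by_cases hb : 1 ≤ p.2
    · apply split (0, 1) <;> simp only [mem_triangle, Prod.fst_sub, Prod.snd_sub] <;> omega
    · apply split (min p.1 2, 0) <;> simp only [mem_triangle, Prod.fst_sub, Prod.snd_sub] <;> omega

theorem nsmul_triangle_one (t : ℕ) : t • triangle 1 = triangle t := by
  induction t with
  | zero => rw [zero_nsmul, triangle_zero, singleton_zero]
  | succ t ih => rw [succ_nsmul, ih, triangle_add_triangle_one]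

theorem triangle_succ (t : ℕ) :
    triangle (t + 1) = Icc 0 (2 * t + 2 : ℤ) ×ˢ {0} ∪ ({(0, 1)} + triangle t) := by
  ext ⟨a, b⟩
  simp only [mem_union, mem_product, mem_Icc, mem_singleton, singleton_add, mem_vadd_finset,
    mem_triangle, Prod.exists, vadd_eq_add, Prod.mk_add_mk, Prod.mk.injEq]
  push_cast
  constructor
  · intro h
    by_cases hb : b = 0
    · omega
    · exact Or.inr ⟨a, b - 1, by omega, by omega⟩
  · rintro (h | ⟨a', b', h, rfl, rfl⟩) <;> omega

theorem card_triangle (t : ℕ) : (triangle t).card = (t + 1) ^ 2 := by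
  induction t with
  | zero => simp [triangle_zero]
  | succ t ih =>
    have hlen : (2 * (t : ℤ) + 2 + 1).toNat = 2 * t + 3 := by omega
    rw [triangle_succ, card_union_of_disjoint, card_product, card_singleton_add, ih,
      Int.card_Icc, card_singleton, mul_one, sub_zero, hlen]
    · ring
    · rw [disjoint_left]
      rintro ⟨a, b⟩ hrow hshift
      simp only [mem_product, mem_singleton, singleton_add, mem_vadd_finset, mem_triangle,
        Prod.exists, vadd_eq_add, Prod.mk_add_mk, Prod.mk.injEq] at hrow hshift
      omega

def triangleEmbedding : ℤ × ℤ →+ ℤ × ℤ :=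
  AddMonoidHom.mk' (fun p => (-p.1, 2 * p.1 + 2 * p.2)) fun p q => by
    ext <;> simp only [Prod.fst_add, Prod.snd_add] <;> ring

theorem triangleEmbedding_injective : Function.Injective triangleEmbedding := by
  rintro ⟨a, b⟩ ⟨c, d⟩ h
  simp only [triangleEmbedding, AddMonoidHom.mk'_apply, Prod.mk.injEq] at h
  ext <;> omega

/-- For `A = {(2,2),(2,0),(1,2),(0,4)} ⊂ ℤ²`, `|tA| = t² + 2t + 1 = (t+1)²` for every `t ≥ 0`. -/
theorem stmt_6 (A : Finset (ℤ × ℤ))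
    (hA : A = {(2,2), (2,0), (1,2), (0,4)}) :
    ∀ t : ℕ, (t • A).card = t ^ 2 + 2 * t + 1 ∧ (t • A).card = (t + 1) ^ 2 := by
  intro t
  have hA' : A = {(2, 0)} + (triangle 1).image triangleEmbedding := by
    rw [hA, triangle_one]
    decide
  rw [hA', card_nsmul_singleton_add_image _ triangleEmbedding_injective, nsmul_triangle_one,
    card_triangle]
  exact ⟨by ring, rfl⟩
end

section
/- Let A ⊂ ℤⁿ be a finite set with |A| = n + 1 such that the subgroup of ℤⁿ generated by the difference set A − A has rank n. Then for every t ≥ 0, |tA| = C(t + n, n). -/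
/-!
The rank condition says that the `n + 1` points of `A` are affinely independent over `ℤ`.
Then an element of `tA` determines the multiset of `t` points of `A` summing to it, since two
such multisets with the same sum have integer count differences summing to zero with vanishing
weighted sum. So `|tA|` is the number of `t`-multisets on `n + 1` letters, `C(t + n, n)`.
-/

open Pointwise Module

-- `affineIndependent_iff_finrank_vectorSpan_eq` assumes a division ring; the Orzech property,
-- which `ℤ` has as a Noetherian ring, suffices.
theorem affineIndependent_of_finrank_vectorSpan_eq {k V P ι : Type*} [Ring k] [Nontrivial k]
    [OrzechProperty k] [AddCommGroup V] [Module k V] [AddTorsor V P] [Fintype ι] {p : ι → P}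
    {n : ℕ} (hc : Fintype.card ι = n + 1) (hp : finrank k (vectorSpan k (Set.range p)) = n) :
    AffineIndependent k p := by
  classical
  obtain ⟨i₁⟩ : Nonempty ι := Fintype.card_pos_iff.mp (by omega)
  rw [affineIndependent_iff_linearIndependent_vsub _ _ i₁,
    linearIndependent_iff_card_eq_finrank_span, Set.finrank,
    ← vectorSpan_range_eq_span_range_vsub_right_ne k p i₁, hp, Fintype.subtype_card]
  rw [← Finset.card_univ] at hc
  simp [Finset.filter_ne', Finset.card_erase_of_mem, hc]

namespace Finset

theorem card_sym {α : Type*} [DecidableEq α] (s : Finset α) (t : ℕ) :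
    (s.sym t).card = (s.card + t - 1).choose t := by
  nth_rw 1 [← s.attach_map_val]
  rw [sym_map, card_map, ← univ_eq_attach, sym_univ, card_univ, Sym.card_sym_eq_choose,
    Fintype.card_coe]

theorem nsmul_eq_image_sym_sum {G : Type*} [AddCommMonoid G] [DecidableEq G] (A : Finset G)
    (t : ℕ) : t • A = (A.sym t).image fun s : Sym G t => (s : Multiset G).sum := by
  induction t with
  | zero => ext; simp [show (∅ : Sym G 0) = 0 from rfl]
  | succ t ih =>
    ext x
    simp only [succ_nsmul, ih, mem_add, mem_image, exists_exists_and_eq_and]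
    constructor
    · rintro ⟨s, hs, a, ha, rfl⟩
      refine ⟨a ::ₛ s, mem_sym_iff.2 fun b hb => ?_, by simp [Sym.coe_cons, add_comm]⟩
      rcases Sym.mem_cons.1 hb with rfl | hb
      exacts [ha, mem_sym_iff.1 hs b hb]
    · rintro ⟨s, hs, rfl⟩
      obtain ⟨a, s, rfl⟩ := s.exists_eq_cons_of_succ
      rw [mem_sym_iff] at hs
      exact ⟨s, mem_sym_iff.2 fun b hb => hs b (Sym.mem_cons_of_mem hb), a,
        hs a (Sym.mem_cons_self a s), by simp [Sym.coe_cons, add_comm]⟩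

variable {V : Type*} [AddCommGroup V] [DecidableEq V] {A : Finset V}

theorem injOn_sum_sym_of_affineIndependent (hA : AffineIndependent ℤ ((↑) : A → V)) (t : ℕ) :
    Set.InjOn (fun s : Sym V t => (s : Multiset V).sum) (A.sym t) := by
  intro s hs s' hs' hsum
  have hcard (s : Sym V t) (hs : s ∈ A.sym t) : ∑ x ∈ A, ((s : Multiset V).count x : ℤ) = t := by
    exact_mod_cast (Multiset.sum_count_eq_card (mem_sym_iff.1 hs)).trans s.2
  have hval (s : Sym V t) (hs : s ∈ A.sym t) :
      ∑ x ∈ A, ((s : Multiset V).count x : ℤ) • x = (s : Multiset V).sum := by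
    simp only [natCast_zsmul]
    exact (val_sum_eq_sum_count_nsmul hs).symm
  have hcount := hA.eq_of_sum_eq_sum_subtype ((hcard s hs).trans (hcard s' hs').symm)
    ((hval s hs).trans (hsum.trans (hval s' hs').symm))
  refine Sym.coe_injective (Multiset.ext.2 fun x => ?_)
  by_cases hx : x ∈ A
  · exact_mod_cast hcount x hx
  · have hzero (s : Sym V t) (hs : s ∈ A.sym t) : (s : Multiset V).count x = 0 :=
      Multiset.count_eq_zero.2 fun h => hx (mem_sym_iff.1 hs x h)
    rw [hzero s hs, hzero s' hs']

theorem card_nsmul_of_affineIndependent (hA : AffineIndependent ℤ ((↑) : A → V)) (t : ℕ) :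
    (t • A).card = (A.card + t - 1).choose t := by
  rw [nsmul_eq_image_sym_sum, card_image_of_injOn (injOn_sum_sym_of_affineIndependent hA t),
    card_sym]

end Finset

/-- If `A ⊂ ℤⁿ` is finite with `|A| = n + 1` and the subgroup of `ℤⁿ` generated by the
difference set `A − A` has rank `n`, then `|tA| = C(t + n, n)` for every `t ≥ 0`. -/
theorem stmt_9 (n : ℕ) (A : Finset (Fin n → ℤ)) (hcard : A.card = n + 1)
    (hrank : Module.finrank ℤ
      (Submodule.span ℤ ((A : Set (Fin n → ℤ)) - (A : Set (Fin n → ℤ)))) = n) :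
    ∀ t : ℕ, (t • A).card = Nat.choose (t + n) n := by
  have hspan : vectorSpan ℤ (Set.range ((↑) : A → (Fin n → ℤ))) =
      Submodule.span ℤ ((A : Set (Fin n → ℤ)) - (A : Set (Fin n → ℤ))) := by
    rw [Subtype.range_coe_subtype, Finset.setOfPred_mem, vectorSpan_def]
    rfl
  have hA : AffineIndependent ℤ ((↑) : A → (Fin n → ℤ)) :=
    affineIndependent_of_finrank_vectorSpan_eq (by simp [hcard]) (hspan ▸ hrank)
  intro t
  rw [Finset.card_nsmul_of_affineIndependent hA, hcard, Nat.add_right_comm, Nat.add_sub_cancel,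
    add_comm, Nat.choose_symm_add]
end

section
/- Let n ≥ 2 and d ≥ 1 be integers, and let B ⊂ ℤ₍≥0₎ⁿ⁺¹ be a set containing all tuples (a₀,…,aₙ) of nonnegative integers summing to d that have at least one zero coordinate (B may also contain other tuples summing to d). Then for every integer t ≥ n + 1, the t-fold sumset tB equals the full set {(a₀,…,aₙ) ∈ ℤ₍≥0₎ⁿ⁺¹ : a₀ + ⋯ + aₙ = td}. -/
open Pointwise

lemma aux_mem_nsmul {M : Type*} [AddCommMonoid M] (B : Set M) :
    ∀ t (a : M), a ∈ t • B ↔ ∃ f : Fin t → M, (∀ k, f k ∈ B) ∧ ∑ k, f k = a := by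
  intro t
  induction t with
  | zero =>
    intro a
    simp [zero_nsmul, Set.mem_zero, eq_comm]
  | succ t ih =>
    intro a
    rw [succ_nsmul']
    constructor
    · rintro ⟨x, hx, y, hy, rfl⟩
      obtain ⟨f, hf, hsum⟩ := (ih y).mp hy
      exact ⟨Fin.cons x f, fun k => Fin.cases hx hf k, by rw [Fin.sum_cons, hsum]⟩
    · rintro ⟨f, hf, rfl⟩
      rw [Fin.sum_univ_succ]
      exact Set.add_mem_add (hf 0) ((ih _).mpr ⟨fun k => f k.succ, fun k => hf _, rfl⟩)

lemma aux_distrib {m : ℕ} (a : Fin m → ℕ) (s : Finset (Fin m)) :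
    ∀ D, D ≤ ∑ i ∈ s, a i →
      ∃ b : Fin m → ℕ, (∀ i, b i ≤ a i) ∧ (∀ i ∉ s, b i = 0) ∧ ∑ i, b i = D := by
  intro D
  induction D with
  | zero => intro _; exact ⟨0, fun i => Nat.zero_le _, fun i _ => rfl, by simp⟩
  | succ D ih =>
    intro hD
    obtain ⟨b, hb1, hb2, hb3⟩ := ih (Nat.le_of_succ_le hD)
    have hlt : ∑ i ∈ s, b i < ∑ i ∈ s, a i := by
      have : ∑ i ∈ s, b i = D := by
        rw [← hb3]
        rw [← Finset.sum_subset (Finset.subset_univ s)]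
        intro x _ hx; exact hb2 x hx
      omega
    obtain ⟨i, his, hi⟩ : ∃ i ∈ s, b i < a i := by
      by_contra h
      push_neg at h
      exact absurd (Finset.sum_le_sum h) (not_le.mpr hlt)
    refine ⟨Function.update b i (b i + 1), ?_, ?_, ?_⟩
    · intro j
      rcases eq_or_ne j i with rfl | hj
      · simpa using hi
      · simp [Function.update_of_ne hj, hb1 j]
    · intro j hj
      have hji : j ≠ i := fun h => hj (h ▸ his)
      simp [Function.update_of_ne hji, hb2 j hj]
    · rw [Finset.sum_update_of_mem (Finset.mem_univ i), Finset.sdiff_singleton_eq_erase]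
      rw [← Finset.sum_erase_add _ _ (Finset.mem_univ i)] at hb3
      omega


lemma aux_decomp (n d : ℕ) (hn : 2 ≤ n) (hd : 1 ≤ d) :
    ∀ t (a : Fin (n+1) → ℕ), (∑ i, a i) = (t+2) * d →
      ∃ f : Fin (t+2) → (Fin (n+1) → ℕ),
        (∀ k, (∑ i, f k i) = d ∧ ∃ i, f k i = 0) ∧ ∑ k, f k = a := by
  intro t
  induction t with
  | zero =>
    intro a ha
    simp only [Nat.zero_add] at ha
    obtain ⟨j, -, hj⟩ := Finset.exists_min_image Finset.univ a ⟨0, Finset.mem_univ 0⟩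
    have hmin : (n+1) * a j ≤ 2 * d := by
      have := Finset.card_nsmul_le_sum Finset.univ a (a j) (fun i hi => hj i hi)
      simpa [Finset.card_univ, ha] using this
    have haj : a j ≤ d := by
      have h3 : 3 * a j ≤ (n+1) * a j := Nat.mul_le_mul_right (a j) (show 3 ≤ n+1 by omega)
      omega
    have hne : (Finset.univ.erase j).Nonempty := by
      rw [← Finset.card_pos, Finset.card_erase_of_mem (Finset.mem_univ j)]
      simp only [Finset.card_univ, Fintype.card_fin]
      omega
    obtain ⟨k, hk, hkmin⟩ := Finset.exists_min_image (Finset.univ.erase j) a hne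
    have hkj : k ≠ j := Finset.ne_of_mem_erase hk
    have hsum_erase : ∑ i ∈ Finset.univ.erase j, a i + a j = 2 * d := by
      rw [Finset.sum_erase_add _ _ (Finset.mem_univ j), ha]
    have hmink : n * a k ≤ ∑ i ∈ Finset.univ.erase j, a i := by
      have := Finset.card_nsmul_le_sum (Finset.univ.erase j) a (a k) (fun i hi => hkmin i hi)
      simpa [Finset.card_erase_of_mem (Finset.mem_univ j), Finset.card_univ] using this
    have hak : a k ≤ d := by
      have h2 : 2 * a k ≤ n * a k := Nat.mul_le_mul_right (a k) hn
      omega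
    have hsum2 : ∑ i ∈ (Finset.univ.erase j).erase k, a i + a k
        = ∑ i ∈ Finset.univ.erase j, a i := Finset.sum_erase_add _ _ hk
    obtain ⟨b, hb1, hb2, hb3⟩ := aux_distrib a ((Finset.univ.erase j).erase k) (d - a j)
      (by omega)
    have hbj : b j = 0 := hb2 j (by simp)
    have hbk : b k = 0 := hb2 k (by simp)
    set c : Fin (n+1) → ℕ := fun i => b i + if i = j then a j else 0 with hc
    have hcj : c j = a j := by simp [hc, hbj]
    have hck : c k = 0 := by simp [hc, hbk, hkj]
    have hcle : ∀ i, c i ≤ a i := by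
      intro i
      rcases eq_or_ne i j with rfl | hij
      · simp [hc, hbj]
      · simp [hc, hij, hb1 i]
    have hcsum : ∑ i, c i = d := by
      rw [hc]
      rw [Finset.sum_add_distrib, hb3, Finset.sum_ite_eq' Finset.univ j (fun _ => a j)]
      simp only [Finset.mem_univ, if_true]
      omega
    have hdsum : ∑ i, (a i - c i) = d := by
      have h1 : ∑ i, (a i - c i) + ∑ i, c i = ∑ i, a i := by
        rw [← Finset.sum_add_distrib]
        exact Finset.sum_congr rfl (fun i _ => by have := hcle i; omega)
      omega
    refine ⟨![c, fun i => a i - c i], ?_, ?_⟩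
    · intro m
      fin_cases m
      · exact ⟨hcsum, ⟨k, hck⟩⟩
      · exact ⟨hdsum, ⟨j, by show a j - c j = 0; simp [hcj]⟩⟩
    · rw [Fin.sum_univ_two]
      funext i
      have := hcle i
      simp only [Matrix.cons_val_zero, Matrix.cons_val_one, Matrix.head_cons, Pi.add_apply]
      omega
  | succ t ih =>
    intro a ha
    obtain ⟨j, -, hj⟩ := Finset.exists_min_image Finset.univ a ⟨0, Finset.mem_univ 0⟩
    have h4 : (t+3) * d = (t+2) * d + d := by ring
    have ha3 : ∑ i, a i = (t+3) * d := by rw [ha]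
    have hmin : (n+1) * a j ≤ (t+3) * d := by
      have := Finset.card_nsmul_le_sum Finset.univ a (a j) (fun i hi => hj i hi)
      simpa [Finset.card_univ, ha3] using this
    have hT : 2 * d ≤ (t+2) * d := Nat.mul_le_mul_right d (show 2 ≤ t+2 by omega)
    have haj : a j ≤ (t+2) * d := by
      have h3 : 3 * a j ≤ (n+1) * a j := Nat.mul_le_mul_right (a j) (show 3 ≤ n+1 by omega)
      omega
    have hsum_erase : ∑ i ∈ Finset.univ.erase j, a i + a j = (t+3) * d := by
      rw [Finset.sum_erase_add _ _ (Finset.mem_univ j), ha3]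
    obtain ⟨b, hb1, hb2, hb3⟩ := aux_distrib a (Finset.univ.erase j) d (by omega)
    have hbj : b j = 0 := hb2 j (by simp)
    have ha' : ∑ i, (a i - b i) = (t+2) * d := by
      have h1 : ∑ i, (a i - b i) + ∑ i, b i = ∑ i, a i := by
        rw [← Finset.sum_add_distrib]
        exact Finset.sum_congr rfl (fun i _ => by have := hb1 i; omega)
      omega
    obtain ⟨f, hf1, hf2⟩ := ih (fun i => a i - b i) ha'
    refine ⟨Fin.cons b f, ?_, ?_⟩
    · intro k
      exact Fin.cases ⟨hb3, ⟨j, hbj⟩⟩ (fun m => hf1 m) k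
    · rw [Fin.sum_cons, hf2]
      funext i
      have := hb1 i
      simp only [Pi.add_apply]
      omega

/-- Let `n ≥ 2`, `d ≥ 1`, and let `B ⊂ ℤ₍≥0₎ⁿ⁺¹` be a set of tuples of coordinate sum `d`
containing all such tuples having at least one zero coordinate. Then for every `t ≥ n + 1`,
the `t`-fold sumset `tB` is the full set of nonnegative tuples of coordinate sum `td`. -/
theorem stmt_11 (n d : ℕ) (hn : 2 ≤ n) (hd : 1 ≤ d)
    (B : Set (Fin (n + 1) → ℕ))
    (hBsum : ∀ b ∈ B, (∑ i, b i) = d)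
    (hBfaces : ∀ a : Fin (n + 1) → ℕ, (∑ i, a i) = d → (∃ i, a i = 0) → a ∈ B) :
    ∀ t : ℕ, n + 1 ≤ t → t • B = {a : Fin (n + 1) → ℕ | (∑ i, a i) = t * d} := by
  intro t ht
  ext a
  rw [aux_mem_nsmul B t a]
  constructor
  · rintro ⟨f, hf, rfl⟩
    show ∑ i, (∑ k, f k) i = t * d
    have : ∀ i, (∑ k, f k) i = ∑ k, f k i := fun i => by
      simpa using Finset.sum_apply i Finset.univ f
    calc ∑ i, (∑ k, f k) i = ∑ i, ∑ k, f k i := Finset.sum_congr rfl (fun i _ => this i)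
      _ = ∑ k, ∑ i, f k i := Finset.sum_comm
      _ = ∑ _k : Fin t, d := Finset.sum_congr rfl (fun k _ => hBsum _ (hf k))
      _ = t * d := by simp [mul_comm]
  · intro ha
    obtain ⟨t', rfl⟩ : ∃ t', t = t' + 2 := ⟨t - 2, by omega⟩
    obtain ⟨f, hf1, hf2⟩ := aux_decomp n d hn hd t' a ha
    exact ⟨f, fun k => hBfaces _ (hf1 k).1 (hf1 k).2, hf2⟩
end

section
/- Let A ⊂ ℤ₍≥0₎ⁿ be a finite set, d_A = max_{a∈A}(a₁+⋯+aₙ), and Ω the set of monomials x₀^{d_A−|a|} x₁^{a₁} ⋯ xₙ^{aₙ} in K[x₀,…,xₙ] for a ∈ A (K a field). Then for every t ≥ 0, the dimension over K of the span of degree-t·d_A monomials in the subalgebra K[Ω] generated by Ω equals |tA|, the cardinality of the t-fold sumset of A. -/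
/-!
Write `e_d(a)` for the exponent vector `(d - |a|, a)` of the monomial `x₀^{d-|a|} x^a`. As long as
`|a| ≤ d` the first coordinate does not truncate, so `e_d(a) + e_{d'}(b) = e_{d+d'}(a + b)`; hence
a product of `t` monomials from `Ω` is the monomial with exponent `e_{t d}(a₁ + ⋯ + a_t)`. The
products therefore form the image of `tA` under the injective map `b ↦ x^{e_{t d}(b)}`, a set of
distinct monomials, which are linearly independent.
-/

open Pointwise MvPolynomial

section

variable {n : ℕ}

noncomputable def homogenizedExponent (d : ℕ) (a : Fin n → ℕ) : Fin (n + 1) →₀ ℕ :=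
  Finsupp.equivFunOnFinite.symm (Fin.cons (d - ∑ i, a i) a)

theorem homogenizedExponent_injective (d : ℕ) :
    Function.Injective (homogenizedExponent (n := n) d) := by
  intro a b h
  simpa [homogenizedExponent, Fin.tail_cons] using
    congrArg (fun e => Fin.tail (Finsupp.equivFunOnFinite e)) h

theorem sum_homogenizedExponent {ι : Type*} (s : Finset ι) (d : ℕ) (a : ι → Fin n → ℕ)
    (ha : ∀ i ∈ s, ∑ j, a i j ≤ d) :
    ∑ i ∈ s, homogenizedExponent d (a i) = homogenizedExponent (s.card * d) (∑ i ∈ s, a i) := by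
  ext k
  rw [Finsupp.finsetSum_apply]
  simp only [homogenizedExponent, Finsupp.equivFunOnFinite_symm_apply_apply]
  cases k using Fin.cases with
  | zero =>
    simp only [Fin.cons_zero]
    rw [Finset.sum_tsub_distrib _ ha, Finset.sum_const, smul_eq_mul, Finset.sum_comm]
    simp only [Finset.sum_apply]
  | succ j => simp [Finset.sum_apply]

end

theorem finrank_span_image_monomial_one {σ : Type*} (R : Type*) [CommSemiring R]
    [StrongRankCondition R] (S : Finset (σ →₀ ℕ)) :
    Module.finrank R (Submodule.span R ((fun e => monomial e (1 : R)) '' (S : Set (σ →₀ ℕ)))) =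
      S.card := by
  have := nontrivial_of_invariantBasisNumber R
  rw [Set.image_eq_range, finrank_span_eq_card]
  · simp
  · exact (basisMonomials σ R).linearIndependent.comp _ Subtype.val_injective

theorem setOf_prod_homogenizedMonomial_eq_image_nsmul (R : Type*) [CommSemiring R] {n d : ℕ}
    {A : Finset (Fin n → ℕ)} (hA : ∀ a ∈ A, ∑ i, a i ≤ d) (t : ℕ) :
    {p : MvPolynomial (Fin (n + 1)) R | ∃ f : Fin t → MvPolynomial (Fin (n + 1)) R,
        (∀ i, f i ∈ (fun a => monomial (homogenizedExponent d a) 1) '' (A : Set _)) ∧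
          p = ∏ i, f i} =
      (fun e => monomial e 1) '' (((t • A).image (homogenizedExponent (t * d)) : Finset _) :
        Set _) := by
  have prod_eq (a : Fin t → Fin n → ℕ) (ha : ∀ i, a i ∈ A) :
      ∏ i, monomial (homogenizedExponent d (a i)) (1 : R) =
        monomial (homogenizedExponent (t * d) (∑ i, a i)) 1 := by
    rw [← monomial_sum_one, sum_homogenizedExponent _ _ _ fun i _ => hA _ (ha i),
      Finset.card_univ, Fintype.card_fin]
  ext p
  simp only [Set.mem_ofPred_eq, Finset.coe_image, Set.image_image, Set.mem_image,
    Finset.mem_coe, Finset.coe_nsmul, Set.mem_nsmul_iff_sum]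
  constructor
  · rintro ⟨f, hf, rfl⟩
    choose a ha hfa using hf
    refine ⟨∑ i, a i, ⟨a, ha, rfl⟩, ?_⟩
    rw [← prod_eq a ha]
    simp only [hfa]
  · rintro ⟨_, ⟨a, ha, rfl⟩, rfl⟩
    exact ⟨_, fun i => ⟨a i, ha i, rfl⟩, (prod_eq a ha).symm⟩

/-- Let `A ⊂ ℤ₍≥0₎ⁿ` be finite with `d_A = max_{a∈A} |a|`, and let `Ω` be the set of monomials
`x₀^{d_A−|a|} x₁^{a₁} ⋯ xₙ^{aₙ}` for `a ∈ A` in `K[x₀,…,xₙ]`. Then for every `t ≥ 0`, the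
`K`-dimension of the span of the degree-`t·d_A` part of `K[Ω]` (spanned by products of `t`
monomials from `Ω`) equals `|tA|`. -/
theorem stmt_14 (K : Type*) [Field K] (n d : ℕ) (A : Finset (Fin n → ℕ))
    (hdmax : IsGreatest {s : ℕ | ∃ a ∈ A, s = ∑ i, a i} d)
    (Ω : Set (MvPolynomial (Fin (n + 1)) K))
    (hΩ : Ω = (fun a : Fin n → ℕ =>
      MvPolynomial.monomial (Finsupp.equivFunOnFinite.symm (Fin.cons (d - ∑ i, a i) a))
        (1 : K)) '' (A : Set _)) :
    ∀ t : ℕ, Module.finrank K (Submodule.span K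
        {p : MvPolynomial (Fin (n + 1)) K |
          ∃ f : Fin t → MvPolynomial (Fin (n + 1)) K, (∀ i, f i ∈ Ω) ∧ p = ∏ i, f i})
      = (t • A).card := by
  intro t
  obtain rfl : Ω = (fun a => monomial (homogenizedExponent d a) 1) '' (A : Set _) := hΩ
  have hA : ∀ a ∈ A, ∑ i, a i ≤ d := fun a ha => hdmax.2 ⟨a, ha, rfl⟩
  rw [setOf_prod_homogenizedMonomial_eq_image_nsmul K hA, finrank_span_image_monomial_one,
    Finset.card_image_of_injective _ (homogenizedExponent_injective _)]
end

section
/- Let 2 ≤ n < d be integers and 0 ≤ α₁ ≤ ⋯ ≤ αₙ < d with gcd(α₁,…,αₙ,d) = 1. Let A = {(a₁,…,aₙ) ∈ ℤ₍≥0₎ⁿ : a₁+⋯+aₙ ≤ d and α₁a₁+⋯+αₙaₙ ≡ 0 (mod d)}. Then every element a ∈ ∪_{t≥0} tA with some coordinate a_i ≥ d satisfies a − d·e_i ∈ ∪_{t≥0} tA; consequently every B-minimal element of ∪_{t≥0} tA (with B = {0, d·e₁, …, d·eₙ}) has all coordinates strictly less than d. -/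
/-!
The semigroup `H` is exactly the cone of nonnegative vectors `a` with `d ∣ α·a`; since
`α·(d eᵢ) ≡ 0 (mod d)`, removing `d eᵢ` from such a vector keeps it in the cone whenever
`aᵢ ≥ d`. To see that every vector of the cone is a sum of elements of `A`, read `a` as a
string of `|a|` units sorted by coordinate. If `|a| ≥ d`, two of the initial segments of
lengths `0, …, d` have congruent weights mod `d` by pigeonhole, and their difference is a
block of `A` with positive size that can be split off; induct on `|a|`.
-/

open Pointwise Finset Matrix

section Cone

variable {ι : Type*} [Fintype ι]

def congruenceCone (d : ℕ) (w : ι → ℤ) : AddSubmonoid (ι → ℤ) where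
  carrier := {a | 0 ≤ a ∧ (d : ℤ) ∣ w ⬝ᵥ a}
  add_mem' := fun ⟨ha, hda⟩ ⟨hb, hdb⟩ =>
    ⟨add_nonneg ha hb, by rw [dotProduct_add]; exact dvd_add hda hdb⟩
  zero_mem' := ⟨le_rfl, by simp⟩

variable {d : ℕ} {w : ι → ℤ} {a : ι → ℤ}

lemma sub_mem_congruenceCone {b : ι → ℤ} (ha : a ∈ congruenceCone d w)
    (hb : b ∈ congruenceCone d w) (hba : b ≤ a) : a - b ∈ congruenceCone d w :=
  ⟨sub_nonneg.2 hba, by rw [dotProduct_sub]; exact dvd_sub ha.2 hb.2⟩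

lemma sub_single_mem_congruenceCone [DecidableEq ι] (ha : a ∈ congruenceCone d w) {i : ι}
    (hi : (d : ℤ) ≤ a i) : a - Pi.single i (d : ℤ) ∈ congruenceCone d w :=
  sub_mem_congruenceCone ha ⟨by simp, by rw [dotProduct_single]; exact dvd_mul_left _ _⟩
    fun j => by
      rcases eq_or_ne j i with rfl | hj
      · simpa using hi
      · simpa [hj] using ha.1 j

end Cone

section Truncation

variable {n : ℕ}

def prefixSum (a : Fin n → ℤ) (m : ℕ) : ℤ := ∑ i : Fin n with i.val < m, a i

lemma prefixSum_zero (a : Fin n → ℤ) : prefixSum a 0 = 0 := by simp [prefixSum]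

lemma prefixSum_succ (a : Fin n → ℤ) (i : Fin n) :
    prefixSum a (i + 1) = prefixSum a i + a i := by
  have split (j : Fin n) : (if j.val < i + 1 then a j else 0) =
      (if j.val < i then a j else 0) + if j = i then a j else 0 := by
    split_ifs <;> grind
  simp only [prefixSum, sum_filter, split, sum_add_distrib, sum_ite_eq', mem_univ, if_true]

lemma prefixSum_self (a : Fin n → ℤ) : prefixSum a n = ∑ i, a i := by
  simp [prefixSum]

lemma prefixSum_mono {a : Fin n → ℤ} (ha : 0 ≤ a) : Monotone (prefixSum a) := fun _ _ hlm =>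
  sum_le_sum_of_subset_of_nonneg (monotone_filter_right _ fun i h => by grind)
    fun i _ _ => ha i

/-- The initial segment of length `k` of the string of units of `a` (for `0 ≤ a`). -/
def truncation (a : Fin n → ℤ) (k : ℤ) : Fin n → ℤ :=
  fun i => min k (prefixSum a (i + 1)) - min k (prefixSum a i)

variable {a : Fin n → ℤ}

lemma truncation_nonneg (ha : 0 ≤ a) (k : ℤ) : 0 ≤ truncation a k := fun i =>
  sub_nonneg.2 (min_le_min_left k (prefixSum_mono ha (Nat.le_add_right i 1)))

lemma truncation_le (ha : 0 ≤ a) (k : ℤ) : truncation a k ≤ a := fun i => by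
  have := prefixSum_succ a i
  have : 0 ≤ a i := ha i
  simp only [truncation]
  omega

lemma truncation_mono (ha : 0 ≤ a) : Monotone (truncation a) := fun k l hkl i => by
  have := prefixSum_mono ha (Nat.le_add_right i 1)
  simp only [truncation]
  omega

lemma sum_truncation {k : ℤ} (hk : 0 ≤ k) : ∑ i, truncation a k i = min k (∑ i, a i) := by
  simp only [truncation]
  rw [Fin.sum_univ_eq_sum_range (fun m => min k (prefixSum a (m + 1)) - min k (prefixSum a m)),
    sum_range_sub (fun m => min k (prefixSum a m)), prefixSum_self, prefixSum_zero,
    min_eq_right hk, sub_zero]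

end Truncation

section Decomposition

variable {n d : ℕ}

lemma exists_block_mem_congruenceCone (hd : 0 < d) (w : Fin n → ℤ) {a : Fin n → ℤ} (ha : 0 ≤ a)
    (hsum : (d : ℤ) ≤ ∑ i, a i) :
    ∃ b ∈ congruenceCone d w, b ≤ a ∧ 0 < ∑ i, b i ∧ ∑ i, b i ≤ d := by
  have : NeZero d := ⟨hd.ne'⟩
  obtain ⟨k, l, hkl, hwkl⟩ := Fintype.exists_ne_map_eq_of_card_lt
    (fun k : Fin (d + 1) => ((w ⬝ᵥ truncation a k : ℤ) : ZMod d)) (by simp)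
  wlog hlt : k < l generalizing k l
  · exact this l k hkl.symm hwkl.symm (hkl.symm.lt_of_le (not_lt.1 hlt))
  have hsize (m : Fin (d + 1)) : ∑ i, truncation a m i = m := by
    rw [sum_truncation (by positivity), min_eq_left (by omega)]
  refine ⟨truncation a l - truncation a k,
    ⟨sub_nonneg.2 (truncation_mono ha (by simpa using hlt.le)), ?_⟩,
    (sub_le_self _ (truncation_nonneg ha k)).trans (truncation_le ha l), ?_⟩
  · rw [dotProduct_sub]
    exact (ZMod.intCast_eq_intCast_iff_dvd_sub _ _ _).1 hwkl
  · simp only [Pi.sub_apply, sum_sub_distrib, hsize]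
    omega

lemma iUnion_nsmul_eq_congruenceCone (hd : 0 < d) (w : Fin n → ℤ) :
    ⋃ t : ℕ, t • {a : Fin n → ℤ | 0 ≤ a ∧ ∑ i, a i ≤ d ∧ (d : ℤ) ∣ w ⬝ᵥ a} =
      congruenceCone d w := by
  set A := {a : Fin n → ℤ | 0 ≤ a ∧ ∑ i, a i ≤ d ∧ (d : ℤ) ∣ w ⬝ᵥ a}
  refine (Set.iUnion_subset fun t => AddSubmonoid.nsmul_subset
    fun a (ha : a ∈ A) => (⟨ha.1, ha.2.2⟩ : a ∈ congruenceCone d w)).antisymm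
    fun a ha => ?_
  have mem_of_le {a} (ha : a ∈ congruenceCone d w) (hsmall : ∑ i, a i ≤ d) :
      a ∈ ⋃ t : ℕ, t • A :=
    Set.mem_iUnion.2 ⟨1, by rw [one_nsmul]; exact ⟨ha.1, hsmall, ha.2⟩⟩
  obtain ⟨N, hN⟩ : ∃ N : ℕ, ∑ i, a i ≤ N := ⟨(∑ i, a i).toNat, Int.self_le_toNat _⟩
  induction N generalizing a with
  | zero => exact mem_of_le ha (hN.trans (by positivity))
  | succ N ih =>
    by_cases hsmall : ∑ i, a i ≤ d
    · exact mem_of_le ha hsmall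
    obtain ⟨b, hb, hba, hb0, hbd⟩ :=
      exists_block_mem_congruenceCone hd w ha.1 (not_le.1 hsmall).le
    obtain ⟨t, ht⟩ := Set.mem_iUnion.1
      (ih _ (sub_mem_congruenceCone ha hb hba)
        (by simp only [Pi.sub_apply, sum_sub_distrib]; omega))
    refine Set.mem_iUnion.2 ⟨t + 1, ?_⟩
    rw [succ_nsmul, ← sub_add_cancel a b]
    exact Set.add_mem_add ht ⟨hb.1, hbd, hb.2⟩

end Decomposition

theorem stmt_19_general (n d : ℕ) (hnd : n < d)
    (α : Fin n → ℕ)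
    (A : Set (Fin n → ℤ))
    (hA : A = {a | (∀ i, 0 ≤ a i) ∧ (∑ i, a i) ≤ (d : ℤ) ∧
      (d : ℤ) ∣ ∑ i, (α i : ℤ) * a i})
    (H : Set (Fin n → ℤ)) (hH : H = ⋃ t : ℕ, t • A) :
    (∀ a ∈ H, ∀ i : Fin n, (d : ℤ) ≤ a i → a - Pi.single i (d : ℤ) ∈ H) ∧
    (∀ a ∈ H, (∀ i : Fin n, a - Pi.single i (d : ℤ) ∉ H) → ∀ i, a i < (d : ℤ)) := by
  obtain rfl := hA
  obtain rfl : H = congruenceCone d (fun i => α i) :=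
    hH.trans (iUnion_nsmul_eq_congruenceCone (n.zero_le.trans_lt hnd) _)
  exact ⟨fun a ha i => sub_single_mem_congruenceCone ha,
    fun a ha hmin i => not_le.1 fun hi => hmin i (sub_single_mem_congruenceCone ha hi)⟩

/-- Let `2 ≤ n < d`, `0 ≤ α₁ ≤ ⋯ ≤ αₙ < d` with `gcd(α₁,…,αₙ,d) = 1`, and let
`A = {a ∈ ℤ₍≥0₎ⁿ : |a| ≤ d, α·a ≡ 0 (mod d)}`. Then every element `a` of the semigroup
`H = ∪_t tA` with some coordinate `a i ≥ d` satisfies `a − d·eᵢ ∈ H`; consequently every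
`B`-minimal element of `H` (with `B = {0, d·e₁, …, d·eₙ}`) has all coordinates `< d`. -/
theorem stmt_19 (n d : ℕ) (hn : 2 ≤ n) (hnd : n < d)
    (α : Fin n → ℕ) (hmono : Monotone α) (hαd : ∀ i, α i < d)
    (hgcd : Nat.gcd (Finset.univ.gcd α) d = 1)
    (A : Set (Fin n → ℤ))
    (hA : A = {a | (∀ i, 0 ≤ a i) ∧ (∑ i, a i) ≤ (d : ℤ) ∧
      (d : ℤ) ∣ ∑ i, (α i : ℤ) * a i})
    (H : Set (Fin n → ℤ)) (hH : H = ⋃ t : ℕ, t • A) :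
    (∀ a ∈ H, ∀ i : Fin n, (d : ℤ) ≤ a i → a - Pi.single i (d : ℤ) ∈ H) ∧
    (∀ a ∈ H, (∀ i : Fin n, a - Pi.single i (d : ℤ) ∉ H) → ∀ i, a i < (d : ℤ)) :=
  stmt_19_general n d hnd α A hA H hH
end
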